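/- arXiv:math/0608508 — 2 statements merged into one kernel-verified Lean document; each statement's English description precedes it below -/
import Mathlib

section
/- Let β ∈ ℂ. Define ℂ-linear endomorphisms L_i, H_i, G_i⁺, G_i⁻ (i ∈ ℤ) of V by: L_i x_j = −(i/2 + j)·x_{i+j}; L_i y_k = −k·y_{i+k} for k ≠ −i, L_i y_{−i} = −(i·β + i²/2)·y_0; H_i x_j = x_{i+j}; H_i y_k = 0 for k ≠ −i, H_i y_{−i} = i·y_0; G_i⁺ x_j = 0 for all j, G_i⁻ y_j = 0 for all j; G_i⁻ x_k = y_{i+k} for k ≠ −i, G_i⁻ x_{−i} = −(β + i)·y_0; G_i⁺ y_j = −2j·x_{i+j}. Then these operators satisfy the Ramond N=2 relations with zero central charge. -/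
noncomputable section

/-- The underlying space of the intermediate-series modules: two copies of `ℤ →₀ ℂ`. -/
abbrev V : Type := (ℤ →₀ ℂ) × (ℤ →₀ ℂ)

/-- The basis vectors `x j`. -/
def x (j : ℤ) : V := (Finsupp.single j 1, 0)

/-- The basis vectors `y j`. -/
def y (j : ℤ) : V := (0, Finsupp.single j 1)

/-- Commutator of endomorphisms. -/
def bracket (P Q : V →ₗ[ℂ] V) : V →ₗ[ℂ] V := P ∘ₗ Q - Q ∘ₗ P

/-- Anticommutator of endomorphisms. -/
def abracket (P Q : V →ₗ[ℂ] V) : V →ₗ[ℂ] V := P ∘ₗ Q + Q ∘ₗ P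

/-- The relations of the Ramond N=2 superconformal algebra with zero central charge. -/
def RamondRel (L H Gp Gm : ℤ → (V →ₗ[ℂ] V)) : Prop :=
  (∀ i j : ℤ, bracket (L i) (L j) = ((i : ℂ) - (j : ℂ)) • L (i + j)) ∧
  (∀ i j : ℤ, bracket (L i) (H j) = (-(j : ℂ)) • H (i + j)) ∧
  (∀ i j : ℤ, bracket (H i) (H j) = 0) ∧
  (∀ i j : ℤ, bracket (L i) (Gp j) = ((i : ℂ) / 2 - (j : ℂ)) • Gp (i + j)) ∧
  (∀ i j : ℤ, bracket (L i) (Gm j) = ((i : ℂ) / 2 - (j : ℂ)) • Gm (i + j)) ∧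
  (∀ i j : ℤ, bracket (H i) (Gp j) = Gp (i + j)) ∧
  (∀ i j : ℤ, bracket (H i) (Gm j) = - Gm (i + j)) ∧
  (∀ i j : ℤ, abracket (Gp i) (Gp j) = 0) ∧
  (∀ i j : ℤ, abracket (Gm i) (Gm j) = 0) ∧
  (∀ i j : ℤ, abracket (Gm i) (Gp j) = (2 : ℂ) • L (i + j) - ((i : ℂ) - (j : ℂ)) • H (i + j))

lemma ext_V {f g : V →ₗ[ℂ] V} (hx : ∀ j, f (x j) = g (x j)) (hy : ∀ j, f (y j) = g (y j)) : f = g := by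
  apply LinearMap.prod_ext <;> apply Finsupp.lhom_ext' <;> intro a <;>
    apply LinearMap.ext_ring <;>
    simpa [x, y, LinearMap.comp_apply] using (by first | exact hx a | exact hy a : _)

theorem stmt_17 (β : ℂ) (L H Gp Gm : ℤ → (V →ₗ[ℂ] V))
    (hLx : ∀ i j : ℤ, L i (x j) = (-((i : ℂ) / 2 + (j : ℂ))) • x (i + j))
    (hLy : ∀ i k : ℤ, k ≠ -i → L i (y k) = (-(k : ℂ)) • y (i + k))
    (hLy0 : ∀ i : ℤ, L i (y (-i)) = (-((i : ℂ) * β + (i : ℂ)^2 / 2)) • y 0)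
    (hHx : ∀ i j : ℤ, H i (x j) = x (i + j))
    (hHy : ∀ i k : ℤ, k ≠ -i → H i (y k) = 0)
    (hHy0 : ∀ i : ℤ, H i (y (-i)) = (i : ℂ) • y 0)
    (hGpx : ∀ i j : ℤ, Gp i (x j) = 0)
    (hGmy : ∀ i j : ℤ, Gm i (y j) = 0)
    (hGmx : ∀ i k : ℤ, k ≠ -i → Gm i (x k) = y (i + k))
    (hGmx0 : ∀ i : ℤ, Gm i (x (-i)) = (-(β + (i : ℂ))) • y 0)
    (hGpy : ∀ i j : ℤ, Gp i (y j) = (-(2 * (j : ℂ))) • x (i + j)) :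
    RamondRel L H Gp Gm := by
  have hLy' : ∀ i k : ℤ, L i (y k) =
      if k = -i then (-((i:ℂ) * β + (i:ℂ)^2/2)) • y 0 else (-(k : ℂ)) • y (i + k) := by
    intro i k
    by_cases h : k = -i
    · subst h; simp [hLy0]
    · simp [h, hLy i k h]
  have hHy' : ∀ i k : ℤ, H i (y k) = if k = -i then (i : ℂ) • y 0 else 0 := by
    intro i k
    by_cases h : k = -i
    · subst h; simp [hHy0]
    · simp [h, hHy i k h]
  have hGmx' : ∀ i k : ℤ, Gm i (x k) = if k = -i then (-(β + (i:ℂ))) • y 0 else y (i + k) := by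
    intro i k
    by_cases h : k = -i
    · subst h; simp [hGmx0]
    · simp [h, hGmx i k h]
  refine ⟨?_, ?_, ?_, ?_, ?_, ?_, ?_, ?_, ?_, ?_⟩ <;>
    intro i j <;>
    apply ext_V <;>
    intro k <;>
    simp only [bracket, abracket, LinearMap.sub_apply, LinearMap.add_apply, LinearMap.neg_apply,
      LinearMap.comp_apply, LinearMap.smul_apply, LinearMap.zero_apply, map_smul, map_zero,
      hLx, hHx, hGpx, hGmy, hGpy, hLy', hHy', hGmx', smul_ite, smul_zero, apply_ite (L i),
      apply_ite (H i), apply_ite (Gp i), apply_ite (Gm i), apply_ite (L j), apply_ite (H j),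
      apply_ite (Gp j), apply_ite (Gm j), map_smul, map_zero, hLx, hHx, hGpx, hGmy, hGpy,
      hLy', hHy', hGmx', smul_ite, smul_zero] <;>
    (try split_ifs) <;>
    first
      | (exfalso; omega)
      | (try (have hs1 : k = -j := by omega
              subst hs1)
         try (have hs2 : k = -i := by omega
              subst hs2)
         try (have hs3 : k = -(i+j) := by omega
              subst hs3)
         try (have hs5 : i = 0 := by omega
              subst hs5)
         try (have hs6 : j = 0 := by omega
              subst hs6)
         try (have hs7 : i = j := by omega
              subst hs7)
         push_cast
         try ring_nf
         try module)
end
end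

section
/- Let a, b ∈ ℂ. Let L_i, H_i, G_i⁺, G_i⁻ be the operators of RA_{a,b} on V, i.e. L_i x_j = (a − j + i·b)·x_{i+j}, L_i y_j = (a − j + i·(b + 1/2))·y_{i+j}, H_i x_j = −(2b + 2)·x_{i+j}, H_i y_j = −(2b + 1)·y_{i+j}, G_i⁻ x_j = 0, G_i⁺ y_j = 0, G_i⁺ x_j = y_{i+j}, G_i⁻ y_j = 2(a + i − j + 2i·b)·x_{i+j}; and let L′_i, H′_i, G′_i⁺, G′_i⁻ be the operators of RA′_{a,b+1/2} on V, i.e. L′_i x_j = (a − j + i·(b + 1/2))·x_{i+j}, L′_i y_j = (a − j + i·b)·y_{i+j}, H′_i x_j = −(2b + 1)·x_{i+j}, H′_i y_j = −(2b + 2)·y_{i+j}, G′_i⁺ x_j = 0, G′_i⁻ y_j = 0, G′_i⁺ y_j = x_{i+j}, G′_i⁻ x_j = 2(a − j + 2i·(b + 1/2))·y_{i+j}. Then the ℂ-linear automorphism σ of V determined by σ(x_j) = y_j and σ(y_j) = x_j for all j ∈ ℤ intertwines the two actions: σ∘L_i = L′_i∘σ, σ∘H_i = H′_i∘σ, σ∘G_i⁺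 = G′_i⁺∘σ, and σ∘G_i⁻ = G′_i⁻∘σ for all i ∈ ℤ. In particular RA_{a,b} ≅ RA′_{a,b+1/2} as modules over the Ramond N=2 superconformal algebra. -/
noncomputable section

/-- The `ℂ`-linear automorphism of `V` swapping the two copies; it is determined by
`σ (x j) = y j` and `σ (y j) = x j`. -/
def σ : V ≃ₗ[ℂ] V := LinearEquiv.prodComm ℂ (ℤ →₀ ℂ) (ℤ →₀ ℂ)

theorem linearMap_ext_xy {M : Type*} [AddCommMonoid M] [Module ℂ M] {f g : V →ₗ[ℂ] M}
    (hx : ∀ j, f (x j) = g (x j)) (hy : ∀ j, f (y j) = g (y j)) : f = g :=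
  LinearMap.prod_ext
    (Finsupp.lhom_ext' fun j => LinearMap.ext_ring (hx j))
    (Finsupp.lhom_ext' fun j => LinearMap.ext_ring (hy j))

@[simp] theorem σ_x (j : ℤ) : σ (x j) = y j := rfl

@[simp] theorem σ_y (j : ℤ) : σ (y j) = x j := rfl

theorem σ_comp_eq_comp_σ {f g : V →ₗ[ℂ] V} (hx : ∀ j, σ (f (x j)) = g (y j))
    (hy : ∀ j, σ (f (y j)) = g (x j)) : σ.toLinearMap ∘ₗ f = g ∘ₗ σ.toLinearMap :=
  linearMap_ext_xy hx hy

theorem stmt_18 (a b : ℂ)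
    (L H Gp Gm L' H' Gp' Gm' : ℤ → (V →ₗ[ℂ] V))
    -- the operators of RA_{a,b}
    (hLx : ∀ i j : ℤ, L i (x j) = (a - (j : ℂ) + (i : ℂ) * b) • x (i + j))
    (hLy : ∀ i j : ℤ, L i (y j) = (a - (j : ℂ) + (i : ℂ) * (b + 1/2)) • y (i + j))
    (hHx : ∀ i j : ℤ, H i (x j) = (-(2 * b + 2)) • x (i + j))
    (hHy : ∀ i j : ℤ, H i (y j) = (-(2 * b + 1)) • y (i + j))
    (hGmx : ∀ i j : ℤ, Gm i (x j) = 0)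
    (hGpy : ∀ i j : ℤ, Gp i (y j) = 0)
    (hGpx : ∀ i j : ℤ, Gp i (x j) = y (i + j))
    (hGmy : ∀ i j : ℤ, Gm i (y j) = (2 * (a + (i : ℂ) - (j : ℂ) + 2 * (i : ℂ) * b)) • x (i + j))
    -- the operators of RA'_{a,b+1/2}
    (hLx' : ∀ i j : ℤ, L' i (x j) = (a - (j : ℂ) + (i : ℂ) * (b + 1/2)) • x (i + j))
    (hLy' : ∀ i j : ℤ, L' i (y j) = (a - (j : ℂ) + (i : ℂ) * b) • y (i + j))
    (hHx' : ∀ i j : ℤ, H' i (x j) = (-(2 * b + 1)) • x (i + j))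
    (hHy' : ∀ i j : ℤ, H' i (y j) = (-(2 * b + 2)) • y (i + j))
    (hGpx' : ∀ i j : ℤ, Gp' i (x j) = 0)
    (hGmy' : ∀ i j : ℤ, Gm' i (y j) = 0)
    (hGpy' : ∀ i j : ℤ, Gp' i (y j) = x (i + j))
    (hGmx' : ∀ i j : ℤ, Gm' i (x j) = (2 * (a - (j : ℂ) + 2 * (i : ℂ) * (b + 1/2))) • y (i + j)) :
    ∀ i : ℤ, (σ.toLinearMap ∘ₗ L i = L' i ∘ₗ σ.toLinearMap) ∧
      (σ.toLinearMap ∘ₗ H i = H' i ∘ₗ σ.toLinearMap) ∧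
      (σ.toLinearMap ∘ₗ Gp i = Gp' i ∘ₗ σ.toLinearMap) ∧
      (σ.toLinearMap ∘ₗ Gm i = Gm' i ∘ₗ σ.toLinearMap) := by
  intro i
  refine ⟨σ_comp_eq_comp_σ (fun j => ?_) (fun j => ?_), σ_comp_eq_comp_σ (fun j => ?_) (fun j => ?_),
    σ_comp_eq_comp_σ (fun j => ?_) (fun j => ?_), σ_comp_eq_comp_σ (fun j => ?_) (fun j => ?_)⟩
  · rw [hLx, hLy', map_smul, σ_x]
  · rw [hLy, hLx', map_smul, σ_y]
  · rw [hHx, hHy', map_smul, σ_x]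
  · rw [hHy, hHx', map_smul, σ_y]
  · rw [hGpx, hGpy', σ_y]
  · rw [hGpy, hGpx', map_zero]
  · rw [hGmx, hGmy', map_zero]
  · rw [hGmy, hGmx', map_smul, σ_x]
    congr 1
    ring
end
end
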